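/- Let F be a finite field of odd characteristic and Exp a nontrivial additive character. For finite index sets, let G(H;Q) : ℓ²(F^m) → ℓ²(F^n) be the Gaussian operator (G(H;Q)f)(x) = Σ_{y : (y,x) ∈ H} Exp(Q(x,y)) f(y), where H ⊆ F^m ⊕ F^n is a linear subspace and Q a quadratic form on H. Then the composition of two Gaussian operators G(K;R) ∘ G(H;Q) is, up to a nonzero complex scalar factor, again a Gaussian operator. -/

import Mathlib

/-!
Composing the operators gives the kernel `(x, z) ↦ Σ_y Exp (Q (y, x) + R (z, y))`, summed over
the `y` with `(x, y) ∈ H` and `(y, z) ∈ K`. This fiber is empty or a coset `y₀ + L` of the fixed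
subspace `L = {y | (0, y) ∈ H ∧ (y, 0) ∈ K}`; choosing `y₀` linearly in `(x, z)`, the exponent
on it becomes `φ₀ + q l + ℓ l` with `q` a fixed quadratic form on `L`, `φ₀` quadratic and `ℓ`
linear in `(x, z)`. Completing the square, `Σ_L Exp (q + ℓ)` equals `Exp (-q v) · Σ_L Exp q`
when `ℓ = polar q v` and vanishes otherwise. The Gauss sum `c = Σ_L Exp q` is nonzero in odd
characteristic: its product with `Σ_L Exp (-q)` is `|L|` times the size of the radical of `q`,
on which `q` vanishes. Hence the kernel is `c` times a Gaussian kernel.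
-/

open scoped Classical in
/-- The Gaussian operator `G(H;Q) : ℓ²(Fᵐ) → ℓ²(Fⁿ)`:
`(G(H;Q)f)(x) = Σ_{y : (y,x) ∈ H} Exp(Q(x,y)) f(y)`. -/
noncomputable def gaussOp {F : Type*} [Field F] [Fintype F] {m n : ℕ}
    (Exp : AddChar F ℂ)
    (H : Submodule F ((Fin m → F) × (Fin n → F)))
    (Q : QuadraticForm F ((Fin n → F) × (Fin m → F)))
    (f : (Fin m → F) → ℂ) : (Fin n → F) → ℂ :=
  fun x => ∑ y : Fin m → F, if (y, x) ∈ H then Exp (Q (x, y)) * f y else 0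

open Finset QuadraticMap

section

open scoped Classical

variable {F : Type*} [Field F] {Exp : AddChar F ℂ}
variable {V : Type*} [AddCommGroup V] [Module F V]

theorem LinearMap.exists_rightInvOn_range {W : Type*} [AddCommGroup W] [Module F W]
    (u : V →ₗ[F] W) : ∃ s : W →ₗ[F] V, Set.RightInvOn s u (LinearMap.range u) := by
  obtain ⟨g, hg⟩ := u.rangeRestrict.exists_rightInverse_of_surjective u.range_rangeRestrict
  obtain ⟨s, hs⟩ := LinearMap.exists_extend g
  refine ⟨s, fun w hw => ?_⟩
  have := congr(($hg ⟨w, hw⟩ : W))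
  rwa [← hs] at this

theorem QuadraticMap.apply_eq_zero_of_polarBilin_eq_zero (hF : ringChar F ≠ 2)
    (q : QuadraticMap F V F) {u : V} (h : q.polarBilin u = 0) : q u = 0 := by
  have h2 : (2 : F) * q u = 0 := by
    simpa [polar_self] using LinearMap.congr_fun h u
  exact (mul_eq_zero.mp h2).resolve_left (Ring.two_ne_zero hF)

variable [Fintype V]

theorem AddChar.sum_apply_linearMap (hExp : Exp ≠ 1) (g : V →ₗ[F] F) :
    ∑ y, Exp (g y) = if g = 0 then (Fintype.card V : ℂ) else 0 := by
  split_ifs with hg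
  · simp [hg]
  obtain ⟨a, ha⟩ := AddChar.ne_one_iff.mp hExp
  obtain ⟨y, hy⟩ : ∃ y, g y ≠ 0 := by
    by_contra! h
    exact hg (LinearMap.ext h)
  have hga : g (((g y)⁻¹ * a) • y) = a := by
    rw [map_smul, smul_eq_mul]
    field_simp
  have hψ : Exp.compAddMonoidHom g.toAddMonoidHom ≠ 1 :=
    AddChar.ne_one_iff.mpr ⟨((g y)⁻¹ * a) • y, by simpa [hga] using ha⟩
  exact AddChar.sum_eq_zero_of_ne_one hψ

/-- Substituting `y = x + u` turns the double sum into a sum over `u` of character sums of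
the linear forms `q.polarBilin u + ℓ`, which vanish unless the form is zero. -/
theorem QuadraticMap.sum_addChar_add_mul_sum_addChar_neg (hExp : Exp ≠ 1)
    (q : QuadraticMap F V F) (ℓ : V →ₗ[F] F) :
    (∑ y, Exp (q y + ℓ y)) * ∑ x, Exp (-q x) =
      Fintype.card V * ∑ u, if q.polarBilin u + ℓ = 0 then Exp (q u + ℓ u) else 0 := by
  have shift : ∀ x, ∑ y, Exp (q y + ℓ y) * Exp (-q x) =
      ∑ u, Exp (q u + ℓ u) * Exp ((q.polarBilin u + ℓ) x) := fun x => by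
    refine (Fintype.sum_equiv (Equiv.addLeft x) _ _ fun u => ?_).symm
    rw [← AddChar.map_add_eq_mul, ← AddChar.map_add_eq_mul]
    congr 1
    simp only [Equiv.coe_addLeft, LinearMap.add_apply, polarBilin_apply_apply, polar, map_add]
    rw [add_comm u x]
    ring
  rw [sum_mul_sum, sum_comm]
  simp only [shift]
  rw [sum_comm, mul_sum]
  refine sum_congr rfl fun u _ => ?_
  rw [← mul_sum, AddChar.sum_apply_linearMap hExp]
  split_ifs <;> ring

theorem QuadraticMap.sum_addChar_ne_zero (hF : ringChar F ≠ 2) (hExp : Exp ≠ 1)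
    (q : QuadraticMap F V F) : ∑ y, Exp (q y) ≠ 0 := by
  have h := q.sum_addChar_add_mul_sum_addChar_neg hExp 0
  have hrad : (∑ u, if q.polarBilin u = 0 then Exp (q u) else 0) =
      #{u | q.polarBilin u = 0} := by
    rw [← sum_boole]
    refine sum_congr rfl fun u _ => ?_
    split_ifs with hu
    · rw [q.apply_eq_zero_of_polarBilin_eq_zero hF hu, AddChar.map_zero_eq_one]
    · rfl
  have hrad_ne : (#{u | q.polarBilin u = 0} : ℂ) ≠ 0 :=
    Nat.cast_ne_zero.mpr (card_ne_zero_of_mem (a := 0) (by simp))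
  simp only [add_zero, LinearMap.zero_apply, hrad] at h
  intro h0
  rw [h0, zero_mul] at h
  exact mul_ne_zero (Nat.cast_ne_zero.mpr Fintype.card_ne_zero) hrad_ne h.symm

theorem QuadraticMap.sum_addChar_add_eq_zero (hF : ringChar F ≠ 2) (hExp : Exp ≠ 1)
    (q : QuadraticMap F V F) {ℓ : V →ₗ[F] F} (hℓ : ℓ ∉ LinearMap.range q.polarBilin) :
    ∑ y, Exp (q y + ℓ y) = 0 := by
  have h := q.sum_addChar_add_mul_sum_addChar_neg hExp ℓ
  have hsolve : ∀ u, q.polarBilin u + ℓ ≠ 0 := fun u hu =>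
    hℓ ⟨-u, by rw [map_neg, neg_eq_iff_eq_neg, eq_neg_of_add_eq_zero_left hu]⟩
  simp only [hsolve, if_false, sum_const_zero, mul_zero] at h
  refine (mul_eq_zero.mp h).resolve_right ?_
  simpa using (-q).sum_addChar_ne_zero hF hExp

theorem QuadraticMap.sum_addChar_add_polarBilin (q : QuadraticMap F V F) (v : V) :
    ∑ y, Exp (q y + q.polarBilin v y) = Exp (-q v) * ∑ y, Exp (q y) := by
  rw [mul_sum]
  refine Fintype.sum_equiv (Equiv.addRight v) _ _ fun y => ?_
  rw [← AddChar.map_add_eq_mul]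
  congr 1
  simp only [Equiv.coe_addRight, polarBilin_apply_apply, polar]
  rw [add_comm v y]
  ring

end

section

open scoped Classical
open LinearMap (fst snd inl)

variable {F : Type*} [Field F] {Exp : AddChar F ℂ}
variable {Y V : Type*} [AddCommGroup Y] [Module F Y] [Fintype Y] [AddCommGroup V] [Module F V]

theorem Submodule.sum_fiber_eq_sum_comap_inl (N : Submodule F (Y × V)) (g : Y × V → ℂ)
    {w₀ : Y × V} (h₀ : w₀ ∈ N) {v : V} (hv : w₀.2 = v) :
    ∑ y, (if (y, v) ∈ N then g (y, v) else 0) =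
      ∑ l : N.comap (inl F Y V), g (w₀ + inl F Y V l) := by
  subst hv
  have htrans : ∀ l : Y, (w₀.1 + l, w₀.2) = w₀ + inl F Y V l := fun l => by ext <;> simp
  have hmem : ∀ l : Y, w₀ + inl F Y V l ∈ N ↔ l ∈ N.comap (inl F Y V) := fun l => by
    rw [N.add_mem_iff_right h₀, Submodule.mem_comap]
  calc ∑ y, (if (y, w₀.2) ∈ N then g (y, w₀.2) else 0)
      = ∑ l, if (w₀.1 + l, w₀.2) ∈ N then g (w₀.1 + l, w₀.2) else 0 :=
        (Fintype.sum_equiv (Equiv.addLeft w₀.1) _ _ fun _ => rfl).symm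
    _ = ∑ l, if l ∈ N.comap (inl F Y V) then g (w₀ + inl F Y V l) else 0 := by
        simp only [htrans, hmem]
    _ = _ := by
        rw [← sum_filter]
        exact sum_subtype _ (by simp) _

theorem exists_sum_fiber_eq_mul_ite_mem (hF : ringChar F ≠ 2) (hExp : Exp ≠ 1)
    (N : Submodule F (Y × V)) (φ : QuadraticMap F (Y × V) F) :
    ∃ c ≠ (0 : ℂ), ∃ (M : Submodule F V) (ψ : QuadraticMap F V F), ∀ v,
      ∑ y, (if (y, v) ∈ N then Exp (φ (y, v)) else 0) = c * if v ∈ M then Exp (ψ v) else 0 := by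
  set L := N.comap (inl F Y V)
  set qL : QuadraticMap F L F := φ.comp ((inl F Y V).comp L.subtype)
  obtain ⟨σ, hσ⟩ := ((snd F Y V).comp N.subtype).exists_rightInvOn_range
  set Λ : V →ₗ[F] L →ₗ[F] F :=
    (φ.polarBilin.compl₂ ((inl F Y V).comp L.subtype)).comp (N.subtype.comp σ)
  obtain ⟨t, ht⟩ := qL.polarBilin.exists_rightInvOn_range
  refine ⟨∑ l, Exp (qL l), qL.sum_addChar_ne_zero hF hExp,
    LinearMap.range ((snd F Y V).comp N.subtype) ⊓ (LinearMap.range qL.polarBilin).comap Λ,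
    φ.comp (N.subtype.comp σ) - qL.comp (t.comp Λ), fun v => ?_⟩
  by_cases hv : v ∈ LinearMap.range ((snd F Y V).comp N.subtype)
  swap
  · rw [if_neg fun h => hv h.1, mul_zero]
    exact sum_eq_zero fun y _ => if_neg fun h => hv ⟨⟨_, h⟩, rfl⟩
  have fiber : ∑ y, (if (y, v) ∈ N then Exp (φ (y, v)) else 0) =
      Exp (φ (σ v)) * ∑ l, Exp (qL l + Λ v l) := by
    rw [N.sum_fiber_eq_sum_comap_inl (fun w => Exp (φ w)) (σ v).2 (hσ hv), mul_sum]
    refine sum_congr rfl fun l _ => ?_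
    rw [← AddChar.map_add_eq_mul]
    congr 1
    simp only [qL, Λ, polar, QuadraticMap.comp_apply, LinearMap.comp_apply,
      LinearMap.compl₂_apply, polarBilin_apply_apply, Submodule.subtype_apply]
    ring
  rw [fiber]
  by_cases hΛ : Λ v ∈ LinearMap.range qL.polarBilin
  · rw [← ht hΛ, sum_addChar_add_polarBilin, if_pos ⟨hv, hΛ⟩]
    have hψ : (φ.comp (N.subtype.comp σ) - qL.comp (t.comp Λ)) v = φ (σ v) + -qL (t (Λ v)) :=
      sub_eq_add_neg _ _
    rw [hψ, AddChar.map_add_eq_mul]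
    ring
  · rw [qL.sum_addChar_add_eq_zero hF hExp hΛ, if_neg fun h => hΛ h.2, mul_zero, mul_zero]

end

section

open LinearMap (fst snd)

variable {F : Type*} [Field F] {X Y Z : Type*} [AddCommGroup X] [Module F X]
  [AddCommGroup Y] [Module F Y] [AddCommGroup Z] [Module F Z]

/-- Triples are ordered `(y, (x, z))`, so that the variable summed out by composition comes
first. -/
def jointSubmodule (H : Submodule F (X × Y)) (K : Submodule F (Y × Z)) :
    Submodule F (Y × X × Z) :=
  H.comap (((fst F X Z).comp (snd F Y (X × Z))).prod (fst F Y (X × Z))) ⊓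
    K.comap ((fst F Y (X × Z)).prod ((snd F X Z).comp (snd F Y (X × Z))))

@[simp]
theorem mem_jointSubmodule {H : Submodule F (X × Y)} {K : Submodule F (Y × Z)}
    {w : Y × X × Z} : w ∈ jointSubmodule H K ↔ (w.2.1, w.1) ∈ H ∧ (w.1, w.2.2) ∈ K :=
  Iff.rfl

def jointForm (Q : QuadraticMap F (Y × X) F) (R : QuadraticMap F (Z × Y) F) :
    QuadraticMap F (Y × X × Z) F :=
  Q.comp ((fst F Y (X × Z)).prod ((fst F X Z).comp (snd F Y (X × Z)))) +
    R.comp (((snd F X Z).comp (snd F Y (X × Z))).prod (fst F Y (X × Z)))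

@[simp]
theorem jointForm_apply (Q : QuadraticMap F (Y × X) F) (R : QuadraticMap F (Z × Y) F)
    (w : Y × X × Z) : jointForm Q R w = Q (w.1, w.2.1) + R (w.2.2, w.1) :=
  rfl

end

open scoped Classical in
theorem gaussOp_gaussOp_apply {F : Type*} [Field F] [Fintype F] {m n k : ℕ}
    (Exp : AddChar F ℂ) (H : Submodule F ((Fin m → F) × (Fin n → F)))
    (Q : QuadraticForm F ((Fin n → F) × (Fin m → F)))
    (K : Submodule F ((Fin n → F) × (Fin k → F)))
    (R : QuadraticForm F ((Fin k → F) × (Fin n → F)))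
    (f : (Fin m → F) → ℂ) (z : Fin k → F) :
    gaussOp Exp K R (gaussOp Exp H Q f) z =
      ∑ x, (∑ y, if (y, x, z) ∈ jointSubmodule H K then
        Exp (jointForm Q R (y, x, z)) else 0) * f x := by
  simp only [gaussOp]
  simp_rw [← ite_zero_mul, mul_sum, sum_mul]
  rw [sum_comm]
  refine sum_congr rfl fun x _ => sum_congr rfl fun y _ => ?_
  by_cases hH : (x, y) ∈ H <;> by_cases hK : (y, z) ∈ K <;>
    simp [hH, hK, AddChar.map_add_eq_mul, mul_assoc, mul_comm, mul_left_comm]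

/-- the composition of two Gaussian operators is, up to a nonzero
complex scalar factor, again a Gaussian operator. -/
theorem gaussOp_comp {F : Type*} [Field F] [Fintype F] (hp : ringChar F ≠ 2)
    (Exp : AddChar F ℂ) (hExp : Exp ≠ 1) {m n k : ℕ}
    (H : Submodule F ((Fin m → F) × (Fin n → F)))
    (Q : QuadraticForm F ((Fin n → F) × (Fin m → F)))
    (K : Submodule F ((Fin n → F) × (Fin k → F)))
    (R : QuadraticForm F ((Fin k → F) × (Fin n → F))) :
    ∃ (c : ℂ) (_ : c ≠ 0)
      (M : Submodule F ((Fin m → F) × (Fin k → F)))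
      (S : QuadraticForm F ((Fin k → F) × (Fin m → F))),
      ∀ f : (Fin m → F) → ℂ,
        gaussOp Exp K R (gaussOp Exp H Q f) = fun x => c * gaussOp Exp M S f x := by
  obtain ⟨c, hc, M, ψ, hψ⟩ :=
    exists_sum_fiber_eq_mul_ite_mem hp hExp (jointSubmodule H K) (jointForm Q R)
  refine ⟨c, hc, M, ψ.comp (LinearEquiv.prodComm F (Fin k → F) (Fin m → F)).toLinearMap,
    fun f => funext fun z => ?_⟩
  rw [gaussOp_gaussOp_apply]
  simp only [hψ, gaussOp, mul_sum]
  refine sum_congr rfl fun x _ => ?_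
  split_ifs <;> simp [mul_assoc]
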